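/- Let μ, r ∈ ℝ, σ > 0, γ > 0 with γ ≠ 1, λ ≥ 0, T > 0. Define V(t,w) = ( w^{1−γ} exp( (r + (μ−r)²/(2γσ²))(1−γ)(T−t) − λ(1−γ)(T−t)/2 ) − 1 )/(1−γ) for t ∈ [0,T] and w > 0, where w^{1−γ} is the real power. Then for every t ∈ [0,T) and w > 0: (i) the function u ↦ ∂V/∂t + (r + (μ−r)u) w V_w + (1/2)σ²(u² + λ/(γσ²)) w² V_{ww} attains its supremum over u ∈ ℝ at u* = (μ−r)/(γσ²); (ii) this supremum equals 0; and (iii) V(T,w) = (w^{1−γ} − 1)/(1−γ). -/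

import Mathlib

/- For `V t w = (w ^ (1 - γ) * exp (k * (T - t)) - 1) / (1 - γ)` and `e = exp (k * (T - t))` one has
`w V_w = e w ^ (1 - γ)` and `w² V_ww = -γ e w ^ (1 - γ)`, so the HJB expression is `e w ^ (1 - γ)` times
a concave quadratic in `u` with vertex at the Merton fraction `(μ - r) / (γ σ²)`. The rate
`k = (r + (μ - r)² / (2 γ σ²) - λ / 2) (1 - γ)` is exactly the one for which the maximum of that
quadratic vanishes. -/

open Real

/-- The expression inside the supremum of the Black–Scholes exploratory HJB equation:
`u ↦ ∂V/∂t + (r + (μ−r)u) w V_w + (1/2)σ²(u² + λ/(γσ²)) w² V_ww`. -/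
noncomputable def HJBtermBS (V : ℝ → ℝ → ℝ) (μ σ r γ lam : ℝ) (t w u : ℝ) : ℝ :=
  deriv (fun s => V s w) t
    + (r + (μ - r) * u) * w * deriv (fun w' => V t w') w
    + (1/2) * σ^2 * (u^2 + lam / (γ * σ^2)) * w^2
        * deriv (fun w' => deriv (fun w'' => V t w'') w') w

noncomputable def crraValue (γ k T t w : ℝ) : ℝ :=
  (w ^ (1 - γ) * exp (k * (T - t)) - 1) / (1 - γ)

section CRRAValue

variable {γ : ℝ} (k T : ℝ)

theorem crraValue_terminal (w : ℝ) : crraValue γ k T T w = (w ^ (1 - γ) - 1) / (1 - γ) := by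
  simp [crraValue]

theorem hasDerivAt_crraValue_time (t w : ℝ) :
    HasDerivAt (fun s => crraValue γ k T s w)
      (-k * w ^ (1 - γ) * exp (k * (T - t)) / (1 - γ)) t := by
  have hlin : HasDerivAt (fun s : ℝ => k * (T - s)) (-k) t := by
    simpa using ((hasDerivAt_id t).const_sub T).const_mul k
  exact (((hlin.exp.const_mul _).sub_const 1).div_const (1 - γ)).congr_deriv (by ring)

theorem hasDerivAt_crraValue_wealth (hγ : γ ≠ 1) (t : ℝ) {w : ℝ} (hw : 0 < w) :
    HasDerivAt (fun x => crraValue γ k T t x) (exp (k * (T - t)) * w ^ (-γ)) w := by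
  have hγ' : 1 - γ ≠ 0 := sub_ne_zero.mpr (Ne.symm hγ)
  refine ((((hasDerivAt_rpow_const (Or.inl hw.ne')).mul_const _).sub_const 1).div_const
    (1 - γ)).congr_deriv ?_
  rw [sub_sub_cancel_left]
  field_simp

theorem hasDerivAt_deriv_crraValue_wealth (hγ : γ ≠ 1) (t : ℝ) {w : ℝ} (hw : 0 < w) :
    HasDerivAt (fun x => deriv (fun y => crraValue γ k T t y) x)
      (exp (k * (T - t)) * (-γ * w ^ (-γ - 1))) w := by
  have hV_w : (fun x => deriv (fun y => crraValue γ k T t y) x) =ᶠ[nhds w]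
      fun x => exp (k * (T - t)) * x ^ (-γ) := by
    filter_upwards [eventually_gt_nhds hw] with x hx
      using (hasDerivAt_crraValue_wealth k T hγ t hx).deriv
  exact ((hasDerivAt_rpow_const (Or.inl hw.ne')).const_mul _).congr_of_eventuallyEq hV_w

end CRRAValue

theorem HJBtermBS_crraValue {μ σ r γ lam : ℝ} (k T : ℝ) (hσ : σ ≠ 0) (hγ : γ ≠ 0) (hγ1 : γ ≠ 1)
    (t : ℝ) {w : ℝ} (hw : 0 < w) (u : ℝ) :
    HJBtermBS (crraValue γ k T) μ σ r γ lam t w u = exp (k * (T - t)) * w ^ (1 - γ) *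
      (r + (μ - r) * u - γ * σ ^ 2 / 2 * u ^ 2 - lam / 2 - k / (1 - γ)) := by
  have hwV_w : w * w ^ (-γ) = w ^ (1 - γ) := by
    rw [sub_eq_add_neg, rpow_add hw, rpow_one]
  have hw2V_ww : w ^ 2 * w ^ (-γ - 1) = w ^ (1 - γ) := by
    rw [show 1 - γ = 2 + (-γ - 1) by ring, rpow_add hw, rpow_two]
  rw [HJBtermBS, (hasDerivAt_crraValue_time k T t w).deriv,
    (hasDerivAt_crraValue_wealth k T hγ1 t hw).deriv,
    (hasDerivAt_deriv_crraValue_wealth k T hγ1 t hw).deriv]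
  have hγ' : 1 - γ ≠ 0 := sub_ne_zero.mpr (Ne.symm hγ1)
  calc _ = exp (k * (T - t)) * (-k * w ^ (1 - γ) / (1 - γ) + (r + (μ - r) * u) * (w * w ^ (-γ))
        - 1 / 2 * σ ^ 2 * (u ^ 2 + lam / (γ * σ ^ 2)) * γ * (w ^ 2 * w ^ (-γ - 1))) := by ring
    _ = _ := by
      rw [hwV_w, hw2V_ww]
      field_simp
      ring

theorem merton_quadratic_eq {μ σ r γ : ℝ} (hσ : σ ≠ 0) (hγ : γ ≠ 0) (u : ℝ) :
    r + (μ - r) * u - γ * σ ^ 2 / 2 * u ^ 2 =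
      r + (μ - r) ^ 2 / (2 * γ * σ ^ 2) - γ * σ ^ 2 / 2 * (u - (μ - r) / (γ * σ ^ 2)) ^ 2 := by
  field_simp
  ring

theorem HJBtermBS_crraValue_merton {μ σ r γ lam : ℝ} (T : ℝ) (hσ : σ ≠ 0) (hγ : γ ≠ 0)
    (hγ1 : γ ≠ 1) (t : ℝ) {w : ℝ} (hw : 0 < w) (u : ℝ) :
    HJBtermBS (crraValue γ ((r + (μ - r) ^ 2 / (2 * γ * σ ^ 2) - lam / 2) * (1 - γ)) T)
        μ σ r γ lam t w u =
      -(exp ((r + (μ - r) ^ 2 / (2 * γ * σ ^ 2) - lam / 2) * (1 - γ) * (T - t)) * w ^ (1 - γ)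
        * (γ * σ ^ 2 / 2)) * (u - (μ - r) / (γ * σ ^ 2)) ^ 2 := by
  have hγ' : 1 - γ ≠ 0 := sub_ne_zero.mpr (Ne.symm hγ1)
  rw [HJBtermBS_crraValue _ T hσ hγ hγ1 t hw, merton_quadratic_eq hσ hγ, mul_div_cancel_right₀ _ hγ']
  ring

theorem stmt16_general (μ r σ γ lam T : ℝ) (hσ : 0 < σ) (hγ : 0 < γ) (hγ1 : γ ≠ 1)
    (V : ℝ → ℝ → ℝ)
    (hV : ∀ t w, V t w =
      (w ^ (1 - γ) * Real.exp ((r + (μ - r)^2 / (2 * γ * σ^2)) * (1 - γ) * (T - t)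
          - lam * (1 - γ) * (T - t) / 2) - 1) / (1 - γ)) :
    ∀ t ∈ Set.Ico 0 T, ∀ w : ℝ, 0 < w →
      (∀ u : ℝ, HJBtermBS V μ σ r γ lam t w u ≤
        HJBtermBS V μ σ r γ lam t w ((μ - r) / (γ * σ^2))) ∧
      HJBtermBS V μ σ r γ lam t w ((μ - r) / (γ * σ^2)) = 0 ∧
      V T w = (w ^ (1 - γ) - 1) / (1 - γ) := by
  intro t _ w hw
  have hV_eq : V = crraValue γ ((r + (μ - r) ^ 2 / (2 * γ * σ ^ 2) - lam / 2) * (1 - γ)) T := by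
    funext s x
    rw [hV, crraValue]
    congr 4
    ring
  have hHJB := HJBtermBS_crraValue_merton (μ := μ) (r := r) (lam := lam) T hσ.ne' hγ.ne' hγ1 t hw
  rw [← hV_eq] at hHJB
  have hC : 0 < exp ((r + (μ - r) ^ 2 / (2 * γ * σ ^ 2) - lam / 2) * (1 - γ) * (T - t))
      * w ^ (1 - γ) * (γ * σ ^ 2 / 2) := by positivity
  have hHJB_merton : HJBtermBS V μ σ r γ lam t w ((μ - r) / (γ * σ ^ 2)) = 0 := by
    rw [hHJB, sub_self, zero_pow two_ne_zero, mul_zero]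
  refine ⟨fun u => ?_, hHJB_merton, hV_eq ▸ crraValue_terminal _ T w⟩
  rw [hHJB_merton, hHJB]
  exact mul_nonpos_of_nonpos_of_nonneg (neg_nonpos.mpr hC.le) (sq_nonneg _)

/-- Black–Scholes specialization of Theorem 1: the function
`V(t,w) = (w^{1−γ} exp((r + (μ−r)²/(2γσ²))(1−γ)(T−t) − λ(1−γ)(T−t)/2) − 1)/(1−γ)`
solves the exploratory HJB equation, with the supremum attained at the Merton fraction
`u* = (μ−r)/(γσ²)` and CRRA terminal condition. -/
theorem stmt16 (μ r σ γ lam T : ℝ) (hσ : 0 < σ) (hγ : 0 < γ) (hγ1 : γ ≠ 1)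
    (hlam : 0 ≤ lam) (hT : 0 < T)
    (V : ℝ → ℝ → ℝ)
    (hV : ∀ t w, V t w =
      (w ^ (1 - γ) * Real.exp ((r + (μ - r)^2 / (2 * γ * σ^2)) * (1 - γ) * (T - t)
          - lam * (1 - γ) * (T - t) / 2) - 1) / (1 - γ)) :
    ∀ t ∈ Set.Ico 0 T, ∀ w : ℝ, 0 < w →
      (∀ u : ℝ, HJBtermBS V μ σ r γ lam t w u ≤
        HJBtermBS V μ σ r γ lam t w ((μ - r) / (γ * σ^2))) ∧
      HJBtermBS V μ σ r γ lam t w ((μ - r) / (γ * σ^2)) = 0 ∧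
      V T w = (w ^ (1 - γ) - 1) / (1 - γ) :=
  stmt16_general μ r σ γ lam T hσ hγ hγ1 V hV
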